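/- Variational lower bound for the bipartite ferromagnet: if β_σ ≥ 0, β_τ ≥ 0 and β_σ β_τ ≥ β_{στ}², then for every N and every m̄_σ, m̄_τ ∈ ℝ, A_N ≥ A^{trial}(m̄_σ, m̄_τ), i.e. (1/N) ln Σ_{σ,τ} e^{-H_N} ≥ ln 2 + α ln cosh(β_σ α m̄_σ + β_{στ}(1-α) m̄_τ) + (1-α) ln cosh(β_{στ} α m̄_σ + β_τ(1-α) m̄_τ) - β_{στ} α(1-α) m̄_σ m̄_τ - (β_σ/2)α² m̄_σ² - (β_τ/2)(1-α)² m̄_τ². -/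
import Mathlib


open Real Finset

/-- A Boolean spin mapped to ±1. -/
noncomputable def spin (b : Bool) : ℝ := if b then 1 else -1

/-- Total spin of a configuration. -/
noncomputable def tot {n : ℕ} (σ : Fin n → Bool) : ℝ := ∑ i, spin (σ i)

/-- Magnetization of a configuration. -/
noncomputable def mag {n : ℕ} (σ : Fin n → Bool) : ℝ := tot σ / (n : ℝ)

/-- Minus the interpolating Hamiltonian: `-H_N(t)`. Note `Σ_{ij} σ_i τ_j = (Σσ)(Στ)`,
`Σ_{ij} σ_i σ_j = (Σσ)²`, etc. -/
noncomputable def Eint (Nσ Nτ : ℕ) (βσ βτ βστ Cσ Cτ t : ℝ)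
    (σ : Fin Nσ → Bool) (τ : Fin Nτ → Bool) : ℝ :=
  t * (βστ / ((Nσ : ℝ) + (Nτ : ℝ)) * (tot σ * tot τ)
      + βσ / (2 * ((Nσ : ℝ) + (Nτ : ℝ))) * (tot σ) ^ 2
      + βτ / (2 * ((Nσ : ℝ) + (Nτ : ℝ))) * (tot τ) ^ 2)
    + (1 - t) * (Cσ * tot σ + Cτ * tot τ)

/-- Interpolating partition function. -/
noncomputable def Zint (Nσ Nτ : ℕ) (βσ βτ βστ Cσ Cτ t : ℝ) : ℝ :=
  ∑ σ : Fin Nσ → Bool, ∑ τ : Fin Nτ → Bool, Real.exp (Eint Nσ Nτ βσ βτ βστ Cσ Cτ t σ τ)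

/-- Interpolating pressure `A_N(t) = (1/N) ln Z_N(t)`. -/
noncomputable def Aint (Nσ Nτ : ℕ) (βσ βτ βστ Cσ Cτ t : ℝ) : ℝ :=
  (1 / ((Nσ : ℝ) + (Nτ : ℝ))) * Real.log (Zint Nσ Nτ βσ βτ βστ Cσ Cτ t)

/-- Gibbs average `⟨O⟩_t` with the interpolating weight. -/
noncomputable def gibbs (Nσ Nτ : ℕ) (βσ βτ βστ Cσ Cτ t : ℝ)
    (O : (Fin Nσ → Bool) → (Fin Nτ → Bool) → ℝ) : ℝ :=
  (∑ σ : Fin Nσ → Bool, ∑ τ : Fin Nτ → Bool,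
      O σ τ * Real.exp (Eint Nσ Nτ βσ βτ βστ Cσ Cτ t σ τ)) / Zint Nσ Nτ βσ βτ βστ Cσ Cτ t

/-- Trial pressure of the fully interacting bipartite ferromagnet. -/
noncomputable def Atrial (α βσ βτ βστ mσ mτ : ℝ) : ℝ :=
  Real.log 2 + α * Real.log (Real.cosh (βσ * α * mσ + βστ * (1 - α) * mτ))
    + (1 - α) * Real.log (Real.cosh (βστ * α * mσ + βτ * (1 - α) * mτ))
    - (βστ * α * (1 - α) * mσ * mτ + (βσ / 2) * α ^ 2 * mσ ^ 2
        + (βτ / 2) * (1 - α) ^ 2 * mτ ^ 2)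

lemma quad_nonneg (βσ βτ βστ : ℝ) (hβσ : 0 ≤ βσ) (hβτ : 0 ≤ βτ)
    (hconv : βστ ^ 2 ≤ βσ * βτ) (u v : ℝ) :
    0 ≤ βσ/2 * u^2 + βστ * (u*v) + βτ/2 * v^2 := by
  rcases eq_or_lt_of_le hβσ with h0 | hpos
  · have hβστ : βστ = 0 := by nlinarith [sq_nonneg βστ]
    rw [← h0, hβστ]
    nlinarith [sq_nonneg v]
  · nlinarith [sq_nonneg (βσ*u + βστ*v), mul_nonneg (sub_nonneg.2 hconv) (sq_nonneg v),
      mul_pos hpos hpos]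

lemma sum_exp_tot (n : ℕ) (a : ℝ) :
    ∑ σ : Fin n → Bool, Real.exp (a * tot σ) = (2 * Real.cosh a) ^ n := by
  induction n with
  | zero => simp [tot]
  | succ n ih =>
    rw [← Equiv.sum_comp (Fin.consEquiv (fun _ : Fin (n+1) => Bool))
      (fun σ => Real.exp (a * tot σ)), Fintype.sum_prod_type]
    have htot : ∀ (b : Bool) (g : Fin n → Bool),
        tot ((Fin.consEquiv (fun _ : Fin (n+1) => Bool)) (b, g)) = spin b + tot g := by
      intro b g
      simp [tot, Fin.consEquiv, Fin.sum_univ_succ]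
    have key : ∀ (b : Bool), ∑ g : Fin n → Bool,
        Real.exp (a * tot ((Fin.consEquiv (fun _ : Fin (n+1) => Bool)) (b, g)))
        = Real.exp (a * spin b) * (2 * Real.cosh a) ^ n := by
      intro b
      rw [← ih, Finset.mul_sum]
      refine Finset.sum_congr rfl fun g _ => ?_
      rw [htot, mul_add, Real.exp_add]
    simp only [key]
    rw [pow_succ]
    have h2 : ∑ b : Bool, Real.exp (a * spin b) = 2 * Real.cosh a := by
      simp [Real.cosh_eq, spin, Fintype.sum_bool]
      ring
    rw [← Finset.sum_mul, h2]; ring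

set_option maxHeartbeats 1000000 in
/-- Variational lower bound: when `βσ, βτ ≥ 0` and `βσ βτ ≥ βστ²`, the pressure of the
bipartite ferromagnet (at `t = 1` the external fields drop out, so we take `Cσ = Cτ = 0`)
dominates the trial pressure for every choice of trial magnetizations. -/
theorem ferro_variational_lower_bound (Nσ Nτ : ℕ) (hσ : 1 ≤ Nσ) (hτ : 1 ≤ Nτ)
    (βσ βτ βστ α : ℝ) (hα : α = (Nσ : ℝ) / ((Nσ : ℝ) + (Nτ : ℝ)))
    (hβσ : 0 ≤ βσ) (hβτ : 0 ≤ βτ) (hconv : βστ ^ 2 ≤ βσ * βτ)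
    (mbσ mbτ : ℝ) :
    Atrial α βσ βτ βστ mbσ mbτ ≤
      (1 / ((Nσ : ℝ) + (Nτ : ℝ))) *
        Real.log (∑ σ : Fin Nσ → Bool, ∑ τ : Fin Nτ → Bool,
          Real.exp (Eint Nσ Nτ βσ βτ βστ 0 0 1 σ τ)) := by
  have hNσ : (0:ℝ) < (Nσ:ℝ) := by exact_mod_cast hσ
  have hNτ : (0:ℝ) < (Nτ:ℝ) := by exact_mod_cast hτ
  have hN : (0:ℝ) < (Nσ:ℝ) + (Nτ:ℝ) := by linarith
  have hN' : ((Nσ:ℝ) + (Nτ:ℝ)) ≠ 0 := ne_of_gt hN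
  set a : ℝ := βσ * α * mbσ + βστ * (1 - α) * mbτ with ha
  set b : ℝ := βστ * α * mbσ + βτ * (1 - α) * mbτ with hb
  set c : ℝ := -(βστ * (Nσ:ℝ) * (Nτ:ℝ) * mbσ * mbτ + βσ/2 * (Nσ:ℝ)^2 * mbσ^2
      + βτ/2 * (Nτ:ℝ)^2 * mbτ^2) / ((Nσ:ℝ) + (Nτ:ℝ)) with hc
  -- pointwise bound on the Hamiltonian
  have hpt : ∀ (σ : Fin Nσ → Bool) (τ : Fin Nτ → Bool),
      a * tot σ + b * tot τ + c ≤ Eint Nσ Nτ βσ βτ βστ 0 0 1 σ τ := by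
    intro σ τ
    have hdiff : Eint Nσ Nτ βσ βτ βστ 0 0 1 σ τ - (a * tot σ + b * tot τ + c)
        = (βσ/2 * (tot σ - (Nσ:ℝ)*mbσ)^2
            + βστ * ((tot σ - (Nσ:ℝ)*mbσ) * (tot τ - (Nτ:ℝ)*mbτ))
            + βτ/2 * (tot τ - (Nτ:ℝ)*mbτ)^2) / ((Nσ:ℝ) + (Nτ:ℝ)) := by
      simp only [Eint, ha, hb, hc, hα]
      field_simp
      ring
    have h1 := quad_nonneg βσ βτ βστ hβσ hβτ hconv (tot σ - (Nσ:ℝ)*mbσ) (tot τ - (Nτ:ℝ)*mbτ)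
    have h2 : 0 ≤ Eint Nσ Nτ βσ βτ βστ 0 0 1 σ τ - (a * tot σ + b * tot τ + c) := by
      rw [hdiff]; exact div_nonneg h1 (le_of_lt hN)
    linarith
  -- the trial partition function
  have hZ' : (∑ σ : Fin Nσ → Bool, ∑ τ : Fin Nτ → Bool,
        Real.exp (a * tot σ + b * tot τ + c))
      = Real.exp c * (2 * Real.cosh a) ^ Nσ * (2 * Real.cosh b) ^ Nτ := by
    have he : ∀ (σ : Fin Nσ → Bool) (τ : Fin Nτ → Bool),
        Real.exp (a * tot σ + b * tot τ + c)
        = Real.exp c * (Real.exp (a * tot σ) * Real.exp (b * tot τ)) := by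
      intro σ τ
      rw [← Real.exp_add, ← Real.exp_add]; ring_nf
    simp only [he, ← Finset.mul_sum, ← Finset.sum_mul]
    rw [sum_exp_tot Nσ a, sum_exp_tot Nτ b]; ring
  have hcoshapos : 0 < 2 * Real.cosh a := by positivity
  have hcoshbpos : 0 < 2 * Real.cosh b := by positivity
  have hZ'pos : 0 < Real.exp c * (2 * Real.cosh a) ^ Nσ * (2 * Real.cosh b) ^ Nτ := by
    positivity
  -- compare partition functions
  have hZZ' : Real.exp c * (2 * Real.cosh a) ^ Nσ * (2 * Real.cosh b) ^ Nτ
      ≤ ∑ σ : Fin Nσ → Bool, ∑ τ : Fin Nτ → Bool,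
          Real.exp (Eint Nσ Nτ βσ βτ βστ 0 0 1 σ τ) := by
    rw [← hZ']
    refine Finset.sum_le_sum fun σ _ => Finset.sum_le_sum fun τ _ => ?_
    exact Real.exp_le_exp.2 (hpt σ τ)
  have hlog : Real.log (Real.exp c * (2 * Real.cosh a) ^ Nσ * (2 * Real.cosh b) ^ Nτ)
      ≤ Real.log (∑ σ : Fin Nσ → Bool, ∑ τ : Fin Nτ → Bool,
          Real.exp (Eint Nσ Nτ βσ βτ βστ 0 0 1 σ τ)) :=
    Real.log_le_log hZ'pos hZZ'
  have hmain : Atrial α βσ βτ βστ mbσ mbτ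
      = (1 / ((Nσ:ℝ) + (Nτ:ℝ))) *
        Real.log (Real.exp c * (2 * Real.cosh a) ^ Nσ * (2 * Real.cosh b) ^ Nτ) := by
    rw [Real.log_mul (by positivity) (by positivity),
      Real.log_mul (by positivity) (by positivity),
      Real.log_exp, Real.log_pow, Real.log_pow,
      Real.log_mul (by norm_num) ((Real.cosh_pos a).ne'),
      Real.log_mul (by norm_num) ((Real.cosh_pos b).ne')]
    simp only [Atrial]
    rw [← ha, ← hb, hc, hα]
    field_simp
    ring
  rw [hmain]
  exact mul_le_mul_of_nonneg_left hlog (by positivity)
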